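/- For every integer n ≥ 0, ∑_{k=0}^{n} 2^{-4k}/(n-k+1)^2 · C(2k,k)/C(2(n-k+1),n-k+1) = (((2n+1)!!)^2 / (2^{2n+3}·(2n+2)!)) · (π² − 2·ψ'(n + 3/2)). -/

import Mathlib

open Real

/-- The trigamma function `ψ'(x) = ∑_{m=0}^∞ 1/(x+m)²`. -/
noncomputable def trigamma (x : ℝ) : ℝ := ∑' m : ℕ, 1 / (x + m) ^ 2

/-- `aa k = C(2k,k)/4^k`. -/
noncomputable def aa (k : ℕ) : ℝ := (Nat.centralBinom k : ℝ) / 4 ^ k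

lemma aa_pos (k : ℕ) : 0 < aa k :=
  div_pos (by exact_mod_cast Nat.centralBinom_pos k) (by positivity)

lemma aa_zero : aa 0 = 1 := by simp [aa, Nat.centralBinom]

lemma aa_succ (k : ℕ) : aa (k + 1) = aa k * (2 * k + 1) / (2 * k + 2) := by
  have h : ((k : ℝ) + 1) * (Nat.centralBinom (k + 1) : ℝ)
      = 2 * (2 * k + 1) * (Nat.centralBinom k : ℝ) := by
    exact_mod_cast congrArg (Nat.cast (R := ℝ)) (Nat.succ_mul_centralBinom_succ k)
  have h4 : (4 : ℝ) ^ k ≠ 0 := by positivity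
  have hk : ((k : ℝ) + 1) ≠ 0 := by positivity
  unfold aa
  rw [pow_succ]
  field_simp
  linear_combination 2 * h

lemma S_eq (m : ℕ) :
    ∑ j ∈ Finset.range m, aa (m - 1 - j) / (((j : ℝ) + 1) ^ 2 * aa (j + 1))
      = 4 * aa m * ∑ k ∈ Finset.range m, 1 / (2 * (k : ℝ) + 1) ^ 2 := by
  induction m with
  | zero => simp
  | succ m ih =>
    rw [Finset.sum_range_succ]
    have key : ∀ j ∈ Finset.range m,
        aa (m + 1 - 1 - j) / (((j : ℝ) + 1) ^ 2 * aa (j + 1))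
          = (2 * m + 1) / (2 * m + 2) * (aa (m - 1 - j) / (((j : ℝ) + 1) ^ 2 * aa (j + 1)))
            - 2 / (((m : ℝ) + 1) * (2 * m + 1))
              * (aa (m - (j + 1)) / aa (j + 1) - aa (m - j) / aa j) := by
      intro j hj
      rw [Finset.mem_range] at hj
      obtain ⟨u, rfl⟩ : ∃ u, m = u + j + 1 := ⟨m - j - 1, by omega⟩
      have e1 : u + j + 1 + 1 - 1 - j = u + 1 := by omega
      have e2 : u + j + 1 - 1 - j = u := by omega
      have e3 : u + j + 1 - (j + 1) = u := by omega
      have e4 : u + j + 1 - j = u + 1 := by omega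
      rw [e1, e2, e3, e4, aa_succ u, aa_succ j]
      have hu := aa_pos u
      have hj' := aa_pos j
      have c1 : (2 * (u : ℝ) + 2) ≠ 0 := by positivity
      have c2 : (2 * (j : ℝ) + 2) ≠ 0 := by positivity
      have c3 : ((j : ℝ) + 1) ≠ 0 := by positivity
      push_cast
      field_simp
      ring
    rw [Finset.sum_congr rfl key, Finset.sum_sub_distrib, ← Finset.mul_sum, ← Finset.mul_sum, ih]
    have tele : ∑ j ∈ Finset.range m,
        (aa (m - (j + 1)) / aa (j + 1) - aa (m - j) / aa j)
          = aa (m - m) / aa m - aa (m - 0) / aa 0 :=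
      Finset.sum_range_sub (fun i => aa (m - i) / aa i) m
    rw [tele]
    have e5 : m - m = 0 := by omega
    have e6 : m - 0 = m := by omega
    have e7 : m + 1 - 1 - m = 0 := by omega
    rw [e5, e6, e7, aa_zero, aa_succ m, Finset.sum_range_succ]
    have hm := aa_pos m
    have c1 : ((m : ℝ) + 1) ≠ 0 := by positivity
    have c2 : (2 * (m : ℝ) + 1) ≠ 0 := by positivity
    have c3 : (2 * (m : ℝ) + 2) ≠ 0 := by positivity
    field_simp
    ring

lemma choose_cast (i : ℕ) : (Nat.choose (2 * i) i : ℝ) = aa i * 4 ^ i := by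
  have h4 : (4 : ℝ) ^ i ≠ 0 := by positivity
  rw [aa, div_mul_cancel₀]
  · rfl
  · exact h4

lemma odd_sq_summable : Summable (fun k : ℕ => 1 / (2 * (k : ℝ) + 1) ^ 2) := by
  have h0 : Summable (fun n : ℕ => 1 / (n : ℝ) ^ 2) :=
    Real.summable_one_div_nat_pow.mpr one_lt_two
  have h1 : Summable (fun n : ℕ => 1 / ((n : ℝ) + 1) ^ 2) := by
    have := (summable_nat_add_iff 1).mpr h0
    refine this.congr fun n => by push_cast; ring
  refine Summable.of_nonneg_of_le (fun k => by positivity) (fun k => ?_) h1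
  have hk : (0 : ℝ) ≤ (k : ℝ) := Nat.cast_nonneg k
  apply one_div_le_one_div_of_le (by positivity)
  nlinarith

lemma odd_sq_tsum : ∑' k : ℕ, 1 / (2 * (k : ℝ) + 1) ^ 2 = π ^ 2 / 8 := by
  have heven : HasSum (fun k : ℕ => 1 / (((2 * k : ℕ) : ℝ)) ^ 2) (π ^ 2 / 24) := by
    have hfun : (fun k : ℕ => 1 / (((2 * k : ℕ) : ℝ)) ^ 2)
        = fun k : ℕ => 1 / 4 * (1 / (k : ℝ) ^ 2) := by
      funext k
      push_cast
      rw [div_mul_div_comm, mul_pow]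
      norm_num
    rw [hfun, show (π : ℝ) ^ 2 / 24 = 1 / 4 * (π ^ 2 / 6) by ring]
    exact hasSum_zeta_two.mul_left (1 / 4)
  have hodd : HasSum (fun k : ℕ => 1 / (((2 * k + 1 : ℕ) : ℝ)) ^ 2)
      (∑' k : ℕ, 1 / (2 * (k : ℝ) + 1) ^ 2) := by
    have hfun : (fun k : ℕ => 1 / (((2 * k + 1 : ℕ) : ℝ)) ^ 2)
        = fun k : ℕ => 1 / (2 * (k : ℝ) + 1) ^ 2 := by
      funext k; push_cast; ring
    rw [hfun]
    exact odd_sq_summable.hasSum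
  have htot := HasSum.even_add_odd (f := fun n : ℕ => 1 / (n : ℝ) ^ 2) heven hodd
  have := htot.unique hasSum_zeta_two
  linarith

lemma trig_eq (n : ℕ) :
    π ^ 2 - 2 * trigamma ((n : ℝ) + 3 / 2)
      = 8 * ∑ k ∈ Finset.range (n + 1), 1 / (2 * (k : ℝ) + 1) ^ 2 := by
  have htri : trigamma ((n : ℝ) + 3 / 2)
      = ∑' k : ℕ, 4 * (1 / (2 * ((k + (n + 1) : ℕ) : ℝ) + 1) ^ 2) := by
    unfold trigamma
    refine tsum_congr fun k => ?_
    have hn : (0 : ℝ) ≤ (n : ℝ) := Nat.cast_nonneg n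
    have hk : (0 : ℝ) ≤ (k : ℝ) := Nat.cast_nonneg k
    rw [mul_one_div]
    push_cast
    rw [div_eq_div_iff (by positivity) (by positivity)]
    ring
  rw [htri, tsum_mul_left]
  have hsplit : ∑ i ∈ Finset.range (n + 1), 1 / (2 * (i : ℝ) + 1) ^ 2
      + ∑' k : ℕ, 1 / (2 * ((k + (n + 1) : ℕ) : ℝ) + 1) ^ 2 = π ^ 2 / 8 := by
    rw [Summable.sum_add_tsum_nat_add (n + 1) odd_sq_summable]
    exact odd_sq_tsum
  linarith

lemma central_df (n : ℕ) :
    (Nat.centralBinom (n + 1) : ℝ) * (Nat.factorial (n + 1) : ℝ)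
      = 2 ^ (n + 1) * (Nat.doubleFactorial (2 * n + 1) : ℝ) := by
  have hnat : Nat.centralBinom (n + 1) * Nat.factorial (n + 1)
      = 2 ^ (n + 1) * Nat.doubleFactorial (2 * n + 1) := by
    have hcb : Nat.centralBinom (n + 1) = Nat.choose (2 * (n + 1)) (n + 1) := rfl
    have h1 : Nat.choose (2 * (n + 1)) (n + 1) * Nat.factorial (n + 1) * Nat.factorial (n + 1)
        = Nat.factorial (2 * (n + 1)) := by
      have h := Nat.choose_mul_factorial_mul_factorial (show n + 1 ≤ 2 * (n + 1) by omega)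
      have e : 2 * (n + 1) - (n + 1) = n + 1 := by omega
      rw [e] at h
      exact h
    have h2 : Nat.factorial (2 * (n + 1))
        = Nat.doubleFactorial (2 * (n + 1)) * Nat.doubleFactorial (2 * n + 1) := by
      have h := Nat.factorial_eq_mul_doubleFactorial (2 * n + 1)
      have e : 2 * n + 1 + 1 = 2 * (n + 1) := by omega
      rw [e] at h
      exact h
    have h3 : Nat.doubleFactorial (2 * (n + 1)) = 2 ^ (n + 1) * Nat.factorial (n + 1) :=
      Nat.doubleFactorial_two_mul (n + 1)
    have h4 : 0 < Nat.factorial (n + 1) := Nat.factorial_pos _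
    have h5 : Nat.centralBinom (n + 1) * Nat.factorial (n + 1) * Nat.factorial (n + 1)
        = 2 ^ (n + 1) * Nat.doubleFactorial (2 * n + 1) * Nat.factorial (n + 1) := by
      rw [hcb, h1, h2, h3]; ring
    exact Nat.eq_of_mul_eq_mul_right h4 h5
  exact_mod_cast congrArg (Nat.cast (R := ℝ)) hnat

lemma fact_df (n : ℕ) :
    (Nat.factorial (2 * n + 2) : ℝ)
      = 2 ^ (n + 1) * (Nat.factorial (n + 1) : ℝ) * (Nat.doubleFactorial (2 * n + 1) : ℝ) := by
  have hnat : Nat.factorial (2 * n + 2)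
      = 2 ^ (n + 1) * Nat.factorial (n + 1) * Nat.doubleFactorial (2 * n + 1) := by
    have h2 := Nat.factorial_eq_mul_doubleFactorial (2 * n + 1)
    have h3 : Nat.doubleFactorial (2 * n + 2) = 2 ^ (n + 1) * Nat.factorial (n + 1) := by
      have h := Nat.doubleFactorial_two_mul (n + 1)
      have e : 2 * (n + 1) = 2 * n + 2 := by omega
      rw [e] at h
      exact h
    rw [show 2 * n + 1 + 1 = 2 * n + 2 by omega] at h2
    rw [h2, h3]
  exact_mod_cast congrArg (Nat.cast (R := ℝ)) hnat

lemma pref_eq (n : ℕ) :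
    ((Nat.doubleFactorial (2 * n + 1) : ℝ) ^ 2
        / (2 ^ (2 * n + 3) * (Nat.factorial (2 * n + 2) : ℝ))) * 8
      = 4 * aa (n + 1) / 4 ^ (n + 1) := by
  have hD : (0 : ℝ) < (Nat.doubleFactorial (2 * n + 1) : ℝ) := by
    exact_mod_cast Nat.doubleFactorial_pos _
  have hF : (0 : ℝ) < (Nat.factorial (n + 1) : ℝ) := by
    exact_mod_cast Nat.factorial_pos _
  have hC := central_df n
  rw [aa, fact_df n]
  rw [show (4 : ℝ) = 2 ^ 2 by norm_num, ← pow_mul]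
  have h2 : (2 : ℝ) ^ (n + 1) ≠ 0 := by positivity
  have h3 : (2 : ℝ) ^ (2 * n + 3) ≠ 0 := by positivity
  have h4 : (2 : ℝ) ^ (2 * (n + 1)) ≠ 0 := by positivity
  field_simp
  linear_combination (-((2 : ℝ) ^ (2 * n + 3) * 2 ^ (n + 1) * 2 ^ 2)) * hC

theorem arcsine_identity_8 (n : ℕ) :
    ∑ k ∈ Finset.range (n + 1),
      (1 / 2 ^ (4 * k)) / ((n : ℝ) - k + 1) ^ 2 *
        ((Nat.choose (2 * k) k : ℝ) / (Nat.choose (2 * (n - k + 1)) (n - k + 1) : ℝ)) =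
    ((Nat.doubleFactorial (2 * n + 1) : ℝ) ^ 2 /
        (2 ^ (2 * n + 3) * (Nat.factorial (2 * n + 2) : ℝ))) *
      (π ^ 2 - 2 * trigamma ((n : ℝ) + 3 / 2)) := by
  have hS := S_eq (n + 1)
  simp only [Nat.add_sub_cancel] at hS
  have hrefl := Finset.sum_range_reflect
    (fun j => aa (n - j) / (((j : ℝ) + 1) ^ 2 * aa (j + 1))) (n + 1)
  simp only [Nat.add_sub_cancel] at hrefl
  have hL : ∑ k ∈ Finset.range (n + 1),
      (1 / 2 ^ (4 * k)) / ((n : ℝ) - k + 1) ^ 2 *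
        ((Nat.choose (2 * k) k : ℝ) / (Nat.choose (2 * (n - k + 1)) (n - k + 1) : ℝ))
      = (1 / 4 ^ (n + 1)) * ∑ j ∈ Finset.range (n + 1),
          aa (n - j) / (((j : ℝ) + 1) ^ 2 * aa (j + 1)) := by
    rw [← hrefl, Finset.mul_sum]
    refine Finset.sum_congr rfl fun k hk => ?_
    rw [Finset.mem_range] at hk
    obtain ⟨j, rfl⟩ : ∃ j, n = k + j := ⟨n - k, by omega⟩
    rw [show k + j - k = j from by omega]
    rw [show k + j - j = k from by omega]
    rw [choose_cast k]
    have hcb : ((Nat.choose (2 * (j + 1)) (j + 1) : ℕ) : ℝ) = aa (j + 1) * 4 ^ (j + 1) := by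
      have h4 : (4 : ℝ) ^ (j + 1) ≠ 0 := by positivity
      rw [aa, div_mul_cancel₀]
      · rfl
      · exact h4
    rw [hcb]
    have hak := aa_pos k
    have haj := aa_pos (j + 1)
    have hj1 : ((j : ℝ) + 1) ≠ 0 := by positivity
    have hcast : ((k + j : ℕ) : ℝ) - (k : ℝ) + 1 = (j : ℝ) + 1 := by push_cast; ring
    rw [hcast]
    rw [show (2 : ℝ) ^ (4 * k) = 4 ^ (2 * k) from by rw [pow_mul, pow_mul]; norm_num]
    have h2a : (4 : ℝ) ^ (2 * k) ≠ 0 := by positivity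
    have h2b : (4 : ℝ) ^ (j + 1) ≠ 0 := by positivity
    have h2c : (4 : ℝ) ^ (k + j + 1) ≠ 0 := by positivity
    have h2d : (4 : ℝ) ^ k ≠ 0 := by positivity
    field_simp
    ring
  rw [hL, hS, trig_eq n]
  have hp := pref_eq n
  linear_combination (-(∑ k ∈ Finset.range (n + 1), 1 / (2 * (k : ℝ) + 1) ^ 2)) * hp
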